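/- arXiv:cs/0510009 — 2 statements merged into one kernel-verified Lean document; each statement's English description precedes it below -/
import Mathlib

section
/- Let p be an odd prime, q = p^s, F = GF(q). In the binary code of the Type I-B graph G(p,s), the indicator vector of the set {(0,j) : j ∈ F \ {0}} ∪ {v_y : y ∈ F \ {0}} is a codeword of Hamming weight 2(q − 1). Consequently the minimum distance d_min of this binary code satisfies q + 1 ≤ d_min ≤ 2(q − 1). -/
open scoped Classical

namespace TypeIB

/-- The nonzero elements of `F`. -/
abbrev Fstar (F : Type*) [Field F] := {j : F // j ≠ 0}

/-- Variable nodes of the Type I-B graph: the root `r`, the nodes `v_y` (y ∈ F) and the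
nodes `(i,j)` with `i ∈ F`, `j ∈ F \ {0}`. -/
abbrev VN (F : Type*) [Field F] := Unit ⊕ (F ⊕ (F × Fstar F))

/-- Constraint nodes of the Type I-B graph: the root `r'`, the nodes `c_i` (i ∈ F) and the
nodes `(i,j)'` with `i ∈ F`, `j ∈ F \ {0}`. -/
abbrev CN (F : Type*) [Field F] := Unit ⊕ (F ⊕ (F × Fstar F))

/-- Adjacency of the Type I-B graph `G(p,s)`:
`r ~ c_i` for every `i`; `c_i ~ (i,j)` for every `j ≠ 0`; `r' ~ v_y` for every `y`;
`v_y ~ (y,j)'` for every `j ≠ 0`; and `(i,j) ~ (k, j + i·k)'` whenever `j + i·k ≠ 0`,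
except that the edges `(0,j) ~ (0,j)'` are omitted. -/
def adj (F : Type*) [Field F] : VN F → CN F → Prop
  | Sum.inl _, Sum.inl _ => False
  | Sum.inl _, Sum.inr (Sum.inl _) => True              -- r ~ c_i
  | Sum.inl _, Sum.inr (Sum.inr _) => False
  | Sum.inr (Sum.inl _), Sum.inl _ => True              -- v_y ~ r'
  | Sum.inr (Sum.inl _), Sum.inr (Sum.inl _) => False
  | Sum.inr (Sum.inl y), Sum.inr (Sum.inr (a, _)) => a = y   -- v_y ~ (y,b)'
  | Sum.inr (Sum.inr _), Sum.inl _ => False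
  | Sum.inr (Sum.inr (i, _)), Sum.inr (Sum.inl k) => k = i   -- c_i ~ (i,j)
  | Sum.inr (Sum.inr (i, j)), Sum.inr (Sum.inr (a, b)) =>
      (b : F) = (j : F) + i * a ∧ ¬(i = 0 ∧ a = 0)

end TypeIB

/-- Hamming weight of a vector: the number of nonzero coordinates. -/
noncomputable def hamWt {V K : Type*} [Zero K] (x : V → K) : ℕ :=
  Nat.card {v : V // x v ≠ 0}

namespace TypeIB

/-- The code of the Type I-B graph over `K`: vectors indexed by the variable nodes whose sum
over the neighbourhood of each constraint node vanishes. -/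
def InCode (F : Type*) [Field F] [Fintype F] (K : Type*) [AddCommMonoid K]
    (x : VN F → K) : Prop :=
  ∀ c : CN F, (∑ v : VN F, if adj F v c then x v else 0) = 0

/-- The minimum distance of the code of the Type I-B graph over `K`: the least Hamming
weight of a nonzero codeword. -/
noncomputable def dmin (F : Type*) [Field F] [Fintype F]
    (K : Type*) [AddCommMonoid K] : ℕ :=
  sInf {w | ∃ x : VN F → K, InCode F K x ∧ x ≠ 0 ∧ hamWt x = w}

end TypeIB

/-- The indicator vector of the set `{(0,j) : j ∈ F \ {0}} ∪ {v_y : y ∈ F \ {0}}`. -/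
noncomputable def cw (F : Type*) [Field F] : TypeIB.VN F → ZMod 2
  | Sum.inl _ => 0
  | Sum.inr (Sum.inl y) => if y = 0 then 0 else 1
  | Sum.inr (Sum.inr (i, _)) => if i = 0 then 1 else 0


/-!
The Tanner graph of `G(p,s)` is `q`-regular on the variable side and has no
4-cycles: two distinct variable nodes share at most one constraint node, essentially because two
distinct lines `t ↦ j + i t` of the affine plane meet at most once. Tanner's bound then gives
`d_min ≥ q + 1`: a support node `v` has `q` constraint neighbours, each must contain a second
support node, and these second nodes are pairwise distinct. For the upper bound, every constraint
node meets the given support set in `0`, `2` or `q - 1` nodes, which are even numbers since `q`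
is odd.
-/

section FourCycleFree

variable {V C K : Type*}

def FourCycleFree (adj : V → C → Prop) : Prop :=
  ∀ ⦃v w : V⦄ ⦃c c' : C⦄, v ≠ w → adj v c → adj w c → adj v c' → adj w c' → c = c'

variable [Fintype V] [AddCommMonoid K] {adj : V → C → Prop} {x : V → K}

lemma exists_ne_adj_ne_zero_of_sum_ite_eq_zero {c : C}
    (hc : (∑ v, if adj v c then x v else 0) = 0) {u : V} (hu : adj u c) (hxu : x u ≠ 0) :
    ∃ w, w ≠ u ∧ adj w c ∧ x w ≠ 0 := by
  by_contra! h
  rw [Finset.sum_eq_single u (fun w _ hw => ite_eq_right_iff.2 (h w hw)) (by simp), if_pos hu]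
    at hc
  exact hxu hc

theorem FourCycleFree.card_adj_add_one_le_hamWt (hG : FourCycleFree adj)
    (hx : ∀ c, (∑ v, if adj v c then x v else 0) = 0) {v : V} (hv : x v ≠ 0) :
    Nat.card {c // adj v c} + 1 ≤ hamWt x := by
  choose w hwv hwc hwx using fun c : {c // adj v c} =>
    exists_ne_adj_ne_zero_of_sum_ite_eq_zero (hx c) c.2 hv
  have hw : Function.Injective w := fun c c' h =>
    Subtype.ext (hG (hwv c).symm c.2 (hwc c) c'.2 (h ▸ hwc c'))
  have : Finite {c // adj v c} := Finite.of_injective w hw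
  let g : Option {c // adj v c} → {u // x u ≠ 0} :=
    fun o => o.elim ⟨v, hv⟩ fun c => ⟨w c, hwx c⟩
  have hg : Function.Injective g := by
    rintro (_ | c) (_ | c') h <;> simp only [g, Option.elim, Subtype.mk.injEq] at h
    exacts [rfl, (hwv c' h.symm).elim, (hwv c h).elim, congrArg some (hw h)]
  rw [hamWt, ← Finite.card_option]
  exact Nat.card_le_card_of_injective g hg

end FourCycleFree

namespace TypeIB

variable {F : Type*} [Field F]

lemma eq_of_add_mul_eq_add_mul {i i' j j' a a' : F} (ha : j + i * a = j' + i' * a)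
    (ha' : j + i * a' = j' + i' * a') (hne : (i, j) ≠ (i', j')) : a = a' := by
  have hprod : (i - i') * (a - a') = 0 := by linear_combination ha - ha'
  rcases mul_eq_zero.1 hprod with hi | ha''
  · obtain rfl := sub_eq_zero.1 hi
    exact absurd (congrArg _ (add_right_cancel ha)) hne
  · exact sub_eq_zero.1 ha''

theorem fourCycleFree_adj : FourCycleFree (adj F) := by
  -- the only case that is not bookkeeping: two `(i,j)`-nodes with two common neighbours `(a,b)'`
  rintro (_ | y | ⟨i, j⟩) (_ | y' | ⟨i', j'⟩) (_ | k | ⟨a, b⟩) (_ | k' | ⟨a', b'⟩)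
    hne h1 h2 h3 h4 <;> simp only [adj] at h1 h2 h3 h4 <;> subst_vars
  all_goals first
    | rfl
    | exact absurd rfl hne
    | obtain rfl := eq_of_add_mul_eq_add_mul (h1.1.symm.trans h2.1) (h3.1.symm.trans h4.1)
        (by simpa [Subtype.ext_iff] using hne)
      simp_all [Subtype.ext_iff]
    | simp_all [Subtype.ext_iff]

/-- `(i,j) ~ (a, j + i a)'` for every `a ≠ -j/i`; for `i = 0` the junk value `-j / 0 = 0` is
exactly the omitted edge `(0,j) ~ (0,j)'`. -/
lemma add_mul_ne_zero_of_ne_neg_div {i a : F} {j : Fstar F} (ha : a ≠ -j / i) :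
    (j : F) + i * a ≠ 0 ∧ ¬(i = 0 ∧ a = 0) := by
  rcases eq_or_ne i 0 with rfl | hi
  · simpa [j.2] using ha
  · refine ⟨fun h => ha ?_, fun h => hi h.1⟩
    field_simp
    linear_combination h

variable [Fintype F]

lemma card_le_card_adj (v : VN F) : Fintype.card F ≤ Nat.card {c // adj F v c} := by
  rw [← Nat.card_eq_fintype_card]
  rcases v with _ | y | ⟨i, j⟩
  · refine Nat.card_le_card_of_injective (fun k => ⟨.inr (.inl k), trivial⟩) fun k k' h => ?_
    simpa [Subtype.ext_iff] using h
  · refine Nat.card_le_card_of_injective (fun b => if hb : b = 0 then ⟨.inl (), trivial⟩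
      else ⟨.inr (.inr (y, ⟨b, hb⟩)), rfl⟩) fun b b' h => ?_
    by_cases hb : b = 0 <;> by_cases hb' : b' = 0 <;> simp_all [Subtype.ext_iff]
  · refine Nat.card_le_card_of_injective (fun a => if ha : a = -j / i then ⟨.inr (.inl i), rfl⟩
      else ⟨.inr (.inr (a, ⟨j + i * a, (add_mul_ne_zero_of_ne_neg_div ha).1⟩)),
        rfl, (add_mul_ne_zero_of_ne_neg_div ha).2⟩) fun a a' h => ?_
    by_cases ha : a = -j / i <;> by_cases ha' : a' = -j / i <;> simp_all [Subtype.ext_iff]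

theorem card_add_one_le_hamWt {K : Type*} [AddCommMonoid K] {x : VN F → K}
    (hx : InCode F K x) (hx0 : x ≠ 0) : Fintype.card F + 1 ≤ hamWt x := by
  obtain ⟨v, hv⟩ := Function.ne_iff.1 hx0
  exact (Nat.add_le_add_right (card_le_card_adj v) 1).trans
    (fourCycleFree_adj.card_adj_add_one_le_hamWt hx hv)

end TypeIB

section Codeword

variable {F : Type*} [Field F]

lemma cw_ne_zero : cw F ≠ 0 := fun h => by
  simpa [cw] using congrFun h (.inr (.inl 1))

variable [Fintype F]

lemma inCode_cw (hq : Odd (Fintype.card F)) : TypeIB.InCode F (ZMod 2) (cw F) := by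
  have hq' : ((Fintype.card F - 1 : ℕ) : ZMod 2) = 0 :=
    ZMod.natCast_eq_zero_iff_even.2 (Nat.Odd.sub_odd hq odd_one)
  rintro (_ | i | ⟨a, b⟩) <;>
    simp only [TypeIB.adj, ne_eq, not_and, cw, Fintype.sum_sum_type, Finset.univ_unique,
      PUnit.default_eq_unit, ↓reduceIte, Finset.sum_const_zero, Finset.sum_ite_eq,
      Finset.mem_univ, zero_add, add_zero]
  · simpa [Finset.sum_ite, Finset.filter_ne'] using hq'
  · rcases eq_or_ne i 0 with rfl | hi
    · simpa [Fintype.sum_prod_type] using hq'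
    · exact Finset.sum_eq_zero fun q _ => by split_ifs <;> simp_all
  · rw [Fintype.sum_eq_single ((0 : F), b)]
    · by_cases ha : a = 0 <;> simp [ha, CharTwo.add_self_eq_zero]
    · rintro ⟨i, j⟩ hq
      by_cases hi : i = 0 <;> simp_all [Subtype.ext_iff, eq_comm]

lemma hamWt_cw : hamWt (cw F) = 2 * (Fintype.card F - 1) := by
  rw [hamWt, Nat.card_eq_fintype_card, Fintype.card_subtype, Finset.card_filter,
    Fintype.sum_sum_type, Fintype.sum_sum_type, Fintype.sum_prod_type]
  simp [cw, Finset.sum_ite, Finset.filter_ne', two_mul]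

end Codeword

theorem stmt_5_general (p s : ℕ) (hp : p.Prime) (hodd : p ≠ 2)
    (F : Type*) [Field F] [Fintype F] (hF : Fintype.card F = p ^ s) :
    -- the indicator vector is a codeword of the binary code of G(p,s)
    TypeIB.InCode F (ZMod 2) (cw F) ∧
    -- of Hamming weight 2(q − 1)
    hamWt (cw F) = 2 * (p ^ s - 1) ∧
    -- consequently q + 1 ≤ d_min ≤ 2(q − 1)
    p ^ s + 1 ≤ TypeIB.dmin F (ZMod 2) ∧
    TypeIB.dmin F (ZMod 2) ≤ 2 * (p ^ s - 1) := by
  have hcw : TypeIB.InCode F (ZMod 2) (cw F) :=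
    inCode_cw (hF ▸ (hp.odd_of_ne_two hodd).pow)
  have hwt : hamWt (cw F) = 2 * (p ^ s - 1) := hF ▸ hamWt_cw
  refine ⟨hcw, hwt, le_csInf ⟨_, cw F, hcw, cw_ne_zero, hwt⟩ ?_,
    Nat.sInf_le ⟨cw F, hcw, cw_ne_zero, hwt⟩⟩
  rintro _ ⟨x, hx, hx0, rfl⟩
  exact hF ▸ TypeIB.card_add_one_le_hamWt hx hx0

theorem stmt_5 (p s : ℕ) (hp : p.Prime) (hodd : p ≠ 2) (hs : 0 < s)
    (F : Type*) [Field F] [Fintype F] (hF : Fintype.card F = p ^ s) :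
    -- the indicator vector is a codeword of the binary code of G(p,s)
    TypeIB.InCode F (ZMod 2) (cw F) ∧
    -- of Hamming weight 2(q − 1)
    hamWt (cw F) = 2 * (p ^ s - 1) ∧
    -- consequently q + 1 ≤ d_min ≤ 2(q − 1)
    p ^ s + 1 ≤ TypeIB.dmin F (ZMod 2) ∧
    TypeIB.dmin F (ZMod 2) ≤ 2 * (p ^ s - 1) :=
  stmt_5_general p s hp hodd F hF
end

section
/- Delete from the Type II ℓ=3 graph P(p,s) the variable node r, the constraint nodes c_x and c_i (i ∈ F), the constraint node (0,0)', and all variable nodes adjacent to (0,0)' (namely (x,0) and (i,0) for every i ∈ F), together with all incident edges. The resulting bipartite graph has exactly q² − 1 variable nodes and q² − 1 constraint nodes, every vertex has degree exactly q = p^s, and its girth is 6. -/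
/-!
Read `(a, b)'` as the point `(a, b)` of the affine plane `F²`, `(x, j)` as the vertical line
`a = j` and `(i, j)` as the line `b = j + i·a`: adjacency is incidence, and the deleted nodes are
the origin and the lines through it. Two distinct lines meet in at most one point, so the
bipartite incidence graph has no 4-cycles and its girth is at least 6; an explicit hexagon shows
that it is exactly 6. A line avoiding the origin has `q` points, none of them deleted, and a point
other than the origin lies on `q + 1` lines, exactly one of which passes through the origin.
-/

open scoped Classical

namespace TypeII3EG

/-- Variable nodes remaining in the Type II ℓ=3 graph after deleting `r`, `(x,0)` and the
`(i,0)` (i ∈ F): the nodes `(x,j)` with `j ≠ 0` and the nodes `(i,j)` with `i ∈ F`, `j ≠ 0`. -/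
abbrev VE (F : Type*) [Field F] := {j : F // j ≠ 0} ⊕ (F × {j : F // j ≠ 0})

/-- Constraint nodes remaining after deleting `c_x`, the `c_i` (i ∈ F) and `(0,0)'`:
the nodes `(a,b)'` with `(a,b) ≠ (0,0)`. -/
abbrev CE (F : Type*) [Field F] := {ab : F × F // ab ≠ (0, 0)}

/-- Adjacency induced from the Type II ℓ=3 graph `P(p,s)`:
`(x,j) ~ (j,b)'` for every `b`, and `(i,j) ~ (a, j + i·a)'` for every `a`. -/
def adj (F : Type*) [Field F] : VE F → CE F → Prop
  | Sum.inl j, ⟨(a, _), _⟩ => a = (j : F)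
  | Sum.inr (i, j), ⟨(a, b), _⟩ => b = (j : F) + i * a

end TypeII3EG

/-- The simple graph on the disjoint union `V ⊕ C` associated to a bipartite adjacency
relation between variable nodes `V` and constraint nodes `C`. -/
def bip {V C : Type*} (adj : V → C → Prop) : SimpleGraph (V ⊕ C) where
  Adj x y :=
    (∃ v c, x = Sum.inl v ∧ y = Sum.inr c ∧ adj v c) ∨
    (∃ v c, x = Sum.inr c ∧ y = Sum.inl v ∧ adj v c)
  symm := by
    refine ⟨?_⟩
    rintro x y (⟨v, c, hx, hy, h⟩ | ⟨v, c, hx, hy, h⟩)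
    · exact Or.inr ⟨v, c, hy, hx, h⟩
    · exact Or.inl ⟨v, c, hy, hx, h⟩
  loopless := by
    refine ⟨?_⟩
    rintro x (⟨v, c, hx, hy, h⟩ | ⟨v, c, hx, hy, h⟩) <;> subst hx <;> simp at hy

lemma SimpleGraph.Walk.IsCycle.exists_adj_of_length_eq_four {α : Type*} {G : SimpleGraph α}
    {u : α} {w : G.Walk u u} (hw : w.IsCycle) (h4 : w.length = 4) :
    ∃ x y z, G.Adj u x ∧ G.Adj x y ∧ G.Adj y z ∧ G.Adj z u ∧ u ≠ y ∧ x ≠ z := by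
  rcases w with _ | ⟨hux, _ | ⟨hxy, _ | ⟨hyz, _ | ⟨hzu, _ | ⟨_, _⟩⟩⟩⟩⟩ <;>
    simp only [Walk.length_cons, Walk.length_nil] at h4 <;> try omega
  have hnd := hw.support_nodup
  simp only [Walk.support_cons, Walk.support_nil, List.tail_cons, List.nodup_cons,
    List.mem_cons, List.not_mem_nil, or_false, not_or] at hnd
  exact ⟨_, _, _, hux, hxy, hyz, hzu, Ne.symm hnd.2.1.2, hnd.1.2.1⟩

section Bipartite

variable {V C : Type*} {r : V → C → Prop}

open SimpleGraph

@[simp] lemma bip_adj_inl_inr {v : V} {c : C} : (bip r).Adj (.inl v) (.inr c) ↔ r v c := by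
  simp [bip]

@[simp] lemma bip_adj_inr_inl {v : V} {c : C} : (bip r).Adj (.inr c) (.inl v) ↔ r v c := by
  simp [bip]

@[simp] lemma not_bip_adj_inl_inl {v v' : V} : ¬ (bip r).Adj (.inl v) (.inl v') := by
  simp [bip]

@[simp] lemma not_bip_adj_inr_inr {c c' : C} : ¬ (bip r).Adj (.inr c) (.inr c') := by
  simp [bip]

def bipColoring (r : V → C → Prop) : (bip r).Coloring Bool :=
  Coloring.mk Sum.isLeft <| by rintro (v | c) (v' | c') <;> simp

lemma six_le_egirth_bip
    (hr : ∀ v v' c c', r v c → r v c' → r v' c → r v' c' → v = v' ∨ c = c') :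
    6 ≤ (bip r).egirth := by
  rw [le_egirth]
  intro u w hw
  have heven : Even w.length := ((bipColoring r).even_length_iff_congr w).mpr Iff.rfl
  by_contra! hlt
  have h4 : w.length = 4 := by
    have := hw.three_le_length; obtain ⟨k, hk⟩ := heven; norm_cast at hlt; omega
  obtain ⟨x, y, z, hux, hxy, hyz, hzu, huy, hxz⟩ := hw.exists_adj_of_length_eq_four h4
  rcases u with v | c <;> rcases x with v₁ | c₁ <;> rcases y with v₂ | c₂ <;>
    rcases z with v₃ | c₃ <;>
    simp only [bip_adj_inl_inr, bip_adj_inr_inl, not_bip_adj_inl_inl, not_bip_adj_inr_inr,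
      ne_eq, Sum.inl.injEq, Sum.inr.injEq] at *
  · exact (hr _ _ _ _ hux hzu hxy hyz).elim huy hxz
  · exact (hr _ _ _ _ hux hxy hzu hyz).elim hxz huy

end Bipartite

namespace TypeII3EG

variable {F : Type*} [Field F]

open SimpleGraph

lemma eq_or_eq_of_adj {v v' : VE F} {c c' : CE F}
    (h₁ : adj F v c) (h₂ : adj F v c') (h₃ : adj F v' c) (h₄ : adj F v' c') :
    v = v' ∨ c = c' := by
  obtain ⟨⟨a, b⟩, hc⟩ := c
  obtain ⟨⟨a', b'⟩, hc'⟩ := c'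
  rcases v with j | ⟨i, j⟩ <;> rcases v' with j' | ⟨i', j'⟩ <;>
    simp only [adj] at h₁ h₂ h₃ h₄ <;>
    simp only [Sum.inl.injEq, Sum.inr.injEq, Subtype.ext_iff, Prod.ext_iff]
  case inr.inr =>
    rcases eq_or_ne i i' with rfl | hi
    · grind
    · have : a = a' := mul_left_cancel₀ (sub_ne_zero.mpr hi)
        (by linear_combination h₃ - h₁ - h₄ + h₂)
      grind
  all_goals grind

lemma egirth_bip_adj_le_six : (bip (adj F)).egirth ≤ 6 := by
  have h₁ : (1 : F) ≠ 0 := one_ne_zero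
  have h₂ : (1 : F) ≠ 2 := fun h => one_ne_zero (by linear_combination -h)
  let w : (bip (adj F)).Walk (.inl (.inl ⟨1, h₁⟩)) (.inl (.inl ⟨1, h₁⟩)) :=
    .cons (v := .inr ⟨(1, 1), by simp⟩) (by simp [adj]) <|
    .cons (v := .inl (.inr (0, ⟨1, h₁⟩))) (by simp [adj]) <|
    .cons (v := .inr ⟨(0, 1), by simp⟩) (by simp [adj]) <|
    .cons (v := .inl (.inr (1, ⟨1, h₁⟩))) (by simp [adj]) <|
    .cons (v := .inr ⟨(1, 2), by simp⟩) (by simp [adj]; norm_num) <|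
    .cons (by simp [adj]) .nil
  have hw : w.IsCycle := by
    simp [w, Walk.cons_isCycle_iff, Walk.cons_isPath_iff, h₂]
  simpa [w] using egirth_le_length hw

lemma egirth_bip_adj : (bip (adj F)).egirth = 6 :=
  le_antisymm egirth_bip_adj_le_six (six_le_egirth_bip fun _ _ _ _ => eq_or_eq_of_adj)

lemma card_adj_inr (a b : F) (h : (a, b) ≠ (0, 0)) :
    Nat.card {ij : F × {j : F // j ≠ 0} // adj F (.inr ij) ⟨(a, b), h⟩} =
      Nat.card {i : F // b - i * a ≠ 0} := Nat.card_congr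
  { toFun := fun ⟨⟨i, j, hj⟩, h⟩ => ⟨i, by simp only [adj] at h; simpa [h]⟩
    invFun := fun i => ⟨(i.1, ⟨b - i * a, i.2⟩), show _ = _ + _ by ring⟩
    left_inv := by rintro ⟨⟨i, j, hj⟩, h : b = j + i * a⟩; simp [h]
    right_inv := fun i => rfl }

variable [Fintype F]

lemma card_VE : Nat.card (VE F) = Fintype.card F ^ 2 - 1 := by
  have hq : 0 < Fintype.card F := Fintype.card_pos
  have hq2 : 1 ≤ Fintype.card F ^ 2 := Nat.one_le_pow _ _ hq
  simp only [Nat.card_eq_fintype_card, Fintype.card_sum, Fintype.card_prod,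
    Fintype.card_subtype_compl, Fintype.card_subtype_eq]
  zify [hq, hq2]
  ring

lemma card_CE : Nat.card (CE F) = Fintype.card F ^ 2 - 1 := by
  simp [Nat.card_eq_fintype_card, Fintype.card_subtype_compl, sq]

lemma card_adj_left (v : VE F) : Nat.card {c : CE F // adj F v c} = Fintype.card F := by
  rw [← Nat.card_eq_fintype_card]
  refine Nat.card_congr ?_
  rcases v with ⟨j, hj⟩ | ⟨i, j, hj⟩
  · exact
      { toFun := fun c => c.1.1.2
        invFun := fun b => ⟨⟨(j, b), by simp [hj]⟩, rfl⟩
        left_inv := by rintro ⟨⟨⟨a, b⟩, -⟩, h : a = j⟩; subst h; rfl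
        right_inv := fun b => rfl }
  · exact
      { toFun := fun c => c.1.1.1
        invFun := fun a => ⟨⟨(a, j + i * a), by grind⟩, rfl⟩
        left_inv := by rintro ⟨⟨⟨a, b⟩, -⟩, h : b = j + i * a⟩; subst h; rfl
        right_inv := fun a => rfl }

lemma card_adj_right (c : CE F) : Nat.card {v : VE F // adj F v c} = Fintype.card F := by
  obtain ⟨⟨a, b⟩, h⟩ := c
  rw [Nat.card_congr Equiv.subtypeSum, Nat.card_sum, card_adj_inr]
  rcases eq_or_ne a 0 with rfl | ha
  · have hb : b ≠ 0 := by simpa using h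
    have : IsEmpty {j : {j : F // j ≠ 0} // adj F (.inl j) ⟨(0, b), h⟩} :=
      ⟨fun ⟨⟨j, hj⟩, h⟩ => hj h.symm⟩
    simp [hb]
  · have : Unique {j : {j : F // j ≠ 0} // adj F (.inl j) ⟨(a, b), h⟩} :=
      { default := ⟨⟨a, ha⟩, rfl⟩
        uniq := fun ⟨⟨j, hj⟩, h⟩ => by simp only [adj] at h; simp [h] }
    -- the line through `(a, b)` of slope `b / a` is the deleted one through the origin
    have hslope (i : F) : b - i * a ≠ 0 ↔ i ≠ b / a := by
      rw [ne_eq, ne_eq, sub_eq_zero, eq_div_iff ha, eq_comm]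
    simp only [hslope, Nat.card_unique, Nat.card_eq_fintype_card, Fintype.card_subtype_compl,
      Fintype.card_subtype_eq]
    have := Fintype.card_pos (α := F)
    omega

end TypeII3EG

theorem stmt_13_general (p s : ℕ)
    (F : Type*) [Field F] [Fintype F] (hF : Fintype.card F = p ^ s) :
    -- exactly q² − 1 variable nodes and q² − 1 constraint nodes
    Nat.card (TypeII3EG.VE F) = (p ^ s) ^ 2 - 1 ∧
    Nat.card (TypeII3EG.CE F) = (p ^ s) ^ 2 - 1 ∧
    -- every variable node has degree exactly q
    (∀ v : TypeII3EG.VE F,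
      Nat.card {c : TypeII3EG.CE F // TypeII3EG.adj F v c} = p ^ s) ∧
    -- every constraint node has degree exactly q
    (∀ c : TypeII3EG.CE F,
      Nat.card {v : TypeII3EG.VE F // TypeII3EG.adj F v c} = p ^ s) ∧
    -- and the girth is 6
    (bip (TypeII3EG.adj F)).egirth = 6 := by
  rw [← hF]
  exact ⟨TypeII3EG.card_VE, TypeII3EG.card_CE, TypeII3EG.card_adj_left,
    TypeII3EG.card_adj_right, TypeII3EG.egirth_bip_adj⟩

theorem stmt_13 (p s : ℕ) (hp : p.Prime) (hs : 0 < s)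
    (F : Type*) [Field F] [Fintype F] (hF : Fintype.card F = p ^ s) :
    -- exactly q² − 1 variable nodes and q² − 1 constraint nodes
    Nat.card (TypeII3EG.VE F) = (p ^ s) ^ 2 - 1 ∧
    Nat.card (TypeII3EG.CE F) = (p ^ s) ^ 2 - 1 ∧
    -- every variable node has degree exactly q
    (∀ v : TypeII3EG.VE F,
      Nat.card {c : TypeII3EG.CE F // TypeII3EG.adj F v c} = p ^ s) ∧
    -- every constraint node has degree exactly q
    (∀ c : TypeII3EG.CE F,
      Nat.card {v : TypeII3EG.VE F // TypeII3EG.adj F v c} = p ^ s) ∧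
    -- and the girth is 6
    (bip (TypeII3EG.adj F)).egirth = 6 :=
  stmt_13_general p s F hF
end
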